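/- (Main bound, Theorem 4) For all f ∈ F and g ∈ G, the target risk is bounded as R_T(fg) ≤ R_S(fg) + d_{FΔF}(p_S^g(Z), p_T^g(Z)) + d_{F_{GΔG}}(p_S, p_T) + λ_{FG}(g), where λ_{FG}(g) = inf_{f' ∈ F, g' ∈ G} [2 R_S(f'g) + R_S(f'g') + R_T(f'g')]. (In a formal version, replace the infimum by: for all f* ∈ F, g* ∈ G, R_T(fg) ≤ R_S(fg) + d_{FΔF}(p_S^g, p_T^g) + d_{F_{GΔG}}(p_S,p_T) + 2R_S(f*g) + R_S(f*g*) + R_T(f*g*).) -/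

import Mathlib

open MeasureTheory

/-- Zero-one loss on binary labels. -/
noncomputable def zoLoss (a b : Bool) : ℝ := if a = b then 0 else 1

/-- Expected disagreement between two binary hypotheses under a distribution on `X`. -/
noncomputable def riskD {X : Type*} [MeasurableSpace X] (μ : Measure X)
    (h h' : X → Bool) : ℝ := ∫ x, zoLoss (h x) (h' x) ∂μ

/-- Risk of a hypothesis against true labels, for a joint distribution on `X × Bool`. -/
noncomputable def riskJ {X : Type*} [MeasurableSpace X] (μ : Measure (X × Bool))
    (h : X → Bool) : ℝ := ∫ p, zoLoss (h p.1) p.2 ∂μ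

/-- The `HΔH`-divergence between two distributions on `X`. -/
noncomputable def hDiv {X : Type*} [MeasurableSpace X] (μ ν : Measure X)
    (H : Set (X → Bool)) : ℝ :=
  sSup {r | ∃ h ∈ H, ∃ h' ∈ H, r = |riskD μ h h' - riskD ν h h'|}

/-- The `F_{GΔG}`-divergence between two distributions on `X`. -/
noncomputable def fggDiv {X Z : Type*} [MeasurableSpace X] (μ ν : Measure X)
    (F : Set (Z → Bool)) (G : Set (X → Z)) : ℝ :=
  sSup {r | ∃ f ∈ F, ∃ g ∈ G, ∃ g' ∈ G,
    r = |riskD μ (f ∘ g) (f ∘ g') - riskD ν (f ∘ g) (f ∘ g')|}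

/-!
Two applications of the triangle-inequality argument of Ben-David et al.: for measurable
`h, h'`, `R_T(h) ≤ R_S(h) + R_S(h') + R_T(h') + (d_T(h, h') - d_S(h, h'))`, where `d` is the
disagreement under the marginal on `X`. Apply it to `(fg, f*g)` and then to `(f*g, f*g*)`.
In the first step both hypotheses share the encoder `g`, so the disagreement shift is measured
on `Z` by `d_{FΔF}(p_S^g, p_T^g)`; in the second they share the predictor `f*`, and the shift is
at most `d_{F_{GΔG}}(p_S, p_T)`.
-/

section ZeroOneLoss

lemma norm_zoLoss_le_one (a b : Bool) : ‖zoLoss a b‖ ≤ 1 := by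
  unfold zoLoss; split <;> norm_num

lemma zoLoss_comm (a b : Bool) : zoLoss a b = zoLoss b a := by
  cases a <;> cases b <;> rfl

lemma zoLoss_triangle (a b c : Bool) : zoLoss a c ≤ zoLoss a b + zoLoss b c := by
  cases a <;> cases b <;> cases c <;> norm_num [zoLoss]

variable {X : Type*} [MeasurableSpace X] {μ : Measure X} {h h' : X → Bool}

lemma measurable_zoLoss (mh : Measurable h) (mh' : Measurable h') :
    Measurable fun x => zoLoss (h x) (h' x) :=
  (measurable_of_countable (Function.uncurry zoLoss)).comp (mh.prodMk mh')

lemma integrable_zoLoss [IsFiniteMeasure μ] (mh : Measurable h)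
    (mh' : Measurable h') : Integrable (fun x => zoLoss (h x) (h' x)) μ :=
  .of_bound (measurable_zoLoss mh mh').aestronglyMeasurable 1 <|
    ae_of_all _ fun _ => norm_zoLoss_le_one _ _

end ZeroOneLoss

section Risk

variable {X : Type*} [MeasurableSpace X]

lemma abs_riskD_le (μ : Measure X) [IsFiniteMeasure μ] (h h' : X → Bool) :
    |riskD μ h h'| ≤ μ.real Set.univ := by
  simpa [riskD, Real.norm_eq_abs] using norm_integral_le_of_norm_le_const
    (ae_of_all μ fun x => norm_zoLoss_le_one (h x) (h' x))

lemma bddAbove_abs_riskD_sub (μ ν : Measure X) [IsFiniteMeasure μ] [IsFiniteMeasure ν] :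
    BddAbove (Set.range fun p : (X → Bool) × (X → Bool) =>
      |riskD μ p.1 p.2 - riskD ν p.1 p.2|) :=
  ⟨μ.real Set.univ + ν.real Set.univ, by
    rintro _ ⟨p, rfl⟩
    exact (abs_sub _ _).trans (add_le_add (abs_riskD_le μ _ _) (abs_riskD_le ν _ _))⟩

lemma riskD_map {Z : Type*} [MeasurableSpace Z] (μ : Measure X) {g : X → Z}
    (mg : Measurable g) {f f' : Z → Bool} (mf : Measurable f) (mf' : Measurable f') :
    riskD (μ.map g) f f' = riskD μ (f ∘ g) (f' ∘ g) :=
  integral_map mg.aemeasurable (measurable_zoLoss mf mf').aestronglyMeasurable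

lemma riskD_comm (μ : Measure X) (h h' : X → Bool) : riskD μ h h' = riskD μ h' h := by
  simp only [riskD, zoLoss_comm]

lemma riskD_triangle (μ : Measure X) [IsFiniteMeasure μ] {h₁ h₂ h₃ : X → Bool}
    (m₁ : Measurable h₁) (m₂ : Measurable h₂) (m₃ : Measurable h₃) :
    riskD μ h₁ h₃ ≤ riskD μ h₁ h₂ + riskD μ h₂ h₃ := by
  rw [riskD, riskD, riskD, ← integral_add (integrable_zoLoss m₁ m₂) (integrable_zoLoss m₂ m₃)]
  exact integral_mono (integrable_zoLoss m₁ m₃)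
    ((integrable_zoLoss m₁ m₂).add (integrable_zoLoss m₂ m₃)) fun x => zoLoss_triangle _ _ _

lemma riskJ_eq_riskD (μ : Measure (X × Bool)) (h : X → Bool) :
    riskJ μ h = riskD μ (h ∘ Prod.fst) Prod.snd :=
  rfl

lemma riskJ_le_add_riskD_sub_riskD (pS pT : Measure (X × Bool)) [IsFiniteMeasure pS]
    [IsFiniteMeasure pT] {h h' : X → Bool} (mh : Measurable h) (mh' : Measurable h') :
    riskJ pT h ≤ riskJ pS h + riskJ pS h' + riskJ pT h'
      + (riskD (pT.map Prod.fst) h h' - riskD (pS.map Prod.fst) h h') := by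
  have mh₁ : Measurable (h ∘ Prod.fst : X × Bool → Bool) := mh.comp measurable_fst
  have mh₁' : Measurable (h' ∘ Prod.fst : X × Bool → Bool) := mh'.comp measurable_fst
  rw [riskD_map _ measurable_fst mh mh', riskD_map _ measurable_fst mh mh']
  simp only [riskJ_eq_riskD]
  linarith [riskD_triangle pT mh₁ mh₁' measurable_snd,
    riskD_triangle pS mh₁ measurable_snd mh₁', riskD_comm pS Prod.snd (h' ∘ Prod.fst)]

end Risk

section Divergence

variable {X : Type*} [MeasurableSpace X] (μ ν : Measure X) [IsFiniteMeasure μ]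
  [IsFiniteMeasure ν]

lemma riskD_sub_riskD_le_hDiv {H : Set (X → Bool)} {h h' : X → Bool} (hh : h ∈ H)
    (hh' : h' ∈ H) : riskD ν h h' - riskD μ h h' ≤ hDiv μ ν H :=
  le_csSup_of_le ((bddAbove_abs_riskD_sub μ ν).mono <| by
      rintro _ ⟨h, -, h', -, rfl⟩
      exact ⟨(h, h'), rfl⟩)
    ⟨h, hh, h', hh', rfl⟩ (abs_sub_comm (riskD μ h h') _ ▸ le_abs_self _)

lemma riskD_sub_riskD_le_fggDiv {Z : Type*} {F : Set (Z → Bool)} {G : Set (X → Z)}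
    {f : Z → Bool} {g g' : X → Z} (hf : f ∈ F) (hg : g ∈ G) (hg' : g' ∈ G) :
    riskD ν (f ∘ g) (f ∘ g') - riskD μ (f ∘ g) (f ∘ g') ≤ fggDiv μ ν F G :=
  le_csSup_of_le ((bddAbove_abs_riskD_sub μ ν).mono <| by
      rintro _ ⟨f, -, g, -, g', -, rfl⟩
      exact ⟨(f ∘ g, f ∘ g'), rfl⟩)
    ⟨f, hf, g, hg, g', hg', rfl⟩ (abs_sub_comm (riskD μ (f ∘ g) _) _ ▸ le_abs_self _)

end Divergence

theorem main_bound {X Z : Type*} [MeasurableSpace X] [MeasurableSpace Z]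
    (pS pT : Measure (X × Bool)) [IsProbabilityMeasure pS] [IsProbabilityMeasure pT]
    (F : Set (Z → Bool)) (G : Set (X → Z))
    (hF : ∀ f ∈ F, Measurable f) (hG : ∀ g ∈ G, Measurable g)
    (f : Z → Bool) (hf : f ∈ F) (g : X → Z) (hg : g ∈ G)
    (fstar : Z → Bool) (hfstar : fstar ∈ F) (gstar : X → Z) (hgstar : gstar ∈ G) :
    riskJ pT (f ∘ g) ≤ riskJ pS (f ∘ g)
      + hDiv ((pS.map Prod.fst).map g) ((pT.map Prod.fst).map g) F
      + fggDiv (pS.map Prod.fst) (pT.map Prod.fst) F G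
      + 2 * riskJ pS (fstar ∘ g) + riskJ pS (fstar ∘ gstar)
      + riskJ pT (fstar ∘ gstar) := by
  have mf := hF f hf
  have mfstar := hF fstar hfstar
  have mg := hG g hg
  have mgstar := hG gstar hgstar
  have change_predictor := riskJ_le_add_riskD_sub_riskD pS pT (mf.comp mg) (mfstar.comp mg)
  have change_encoder :=
    riskJ_le_add_riskD_sub_riskD pS pT (mfstar.comp mg) (mfstar.comp mgstar)
  have shift_in_Z := riskD_sub_riskD_le_hDiv ((pS.map Prod.fst).map g)
    ((pT.map Prod.fst).map g) hf hfstar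
  rw [riskD_map _ mg mf mfstar, riskD_map _ mg mf mfstar] at shift_in_Z
  have shift_in_X :=
    riskD_sub_riskD_le_fggDiv (pS.map Prod.fst) (pT.map Prod.fst) hfstar hg hgstar
  linarith
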